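/- arXiv:2010.03829 — 3 statements merged into one kernel-verified Lean document; each statement's English description precedes it below -/
import Mathlib

section
/- For n-partite graphs G1 and G2 with ordered vertex partitions, and a clique S in the partite product G1 ⊛ G2, the link of S in G1 ⊛ G2 equals the partite product of the link of the projection of S to G1 with the link of the projection of S to G2. -/
/-- The common neighborhood (link vertex set) of a set of vertices. -/
def commonNbrs {V : Type*} (G : SimpleGraph V) (s : Set V) : Set V :=
  {v | ∀ u ∈ s, G.Adj u v}

/-- The partite product of two `n`-partite graphs (with parts given by type maps `t1`, `t2`):
vertices are pairs lying in parts with the same index, and two pairs are adjacent iff both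
coordinates are adjacent. -/
def partiteProd {V1 V2 : Type*} {nn : ℕ} (t1 : V1 → Fin nn) (t2 : V2 → Fin nn)
    (G1 : SimpleGraph V1) (G2 : SimpleGraph V2) :
    SimpleGraph {p : V1 × V2 // t1 p.1 = t2 p.2} where
  Adj x y := G1.Adj x.val.1 y.val.1 ∧ G2.Adj x.val.2 y.val.2
  symm := ⟨fun _ _ h => ⟨h.1.symm, h.2.symm⟩⟩
  loopless := ⟨fun x h => G1.loopless.irrefl _ h.1⟩

@[simp]
theorem partiteProd_adj {V1 V2 : Type*} {nn : ℕ} {t1 : V1 → Fin nn} {t2 : V2 → Fin nn}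
    {G1 : SimpleGraph V1} {G2 : SimpleGraph V2} {x y : {p : V1 × V2 // t1 p.1 = t2 p.2}} :
    (partiteProd t1 t2 G1 G2).Adj x y ↔ G1.Adj x.val.1 y.val.1 ∧ G2.Adj x.val.2 y.val.2 :=
  Iff.rfl

theorem mem_commonNbrs_image {V W : Type*} {G : SimpleGraph W} {f : V → W} {s : Set V} {w : W} :
    w ∈ commonNbrs G (f '' s) ↔ ∀ u ∈ s, G.Adj (f u) w :=
  Set.forall_mem_image

theorem commonNbrs_partiteProd {V1 V2 : Type*} {nn : ℕ} (t1 : V1 → Fin nn) (t2 : V2 → Fin nn)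
    (G1 : SimpleGraph V1) (G2 : SimpleGraph V2) (S : Set {p : V1 × V2 // t1 p.1 = t2 p.2}) :
    commonNbrs (partiteProd t1 t2 G1 G2) S =
      {x | x.val.1 ∈ commonNbrs G1 ((fun p => p.val.1) '' S) ∧
           x.val.2 ∈ commonNbrs G2 ((fun p => p.val.2) '' S)} := by
  ext x
  exact forall₂_and.trans (and_congr mem_commonNbrs_image mem_commonNbrs_image).symm

theorem stmt2_general {V1 V2 : Type*} (nn : ℕ) (t1 : V1 → Fin nn) (t2 : V2 → Fin nn)
    (G1 : SimpleGraph V1) (G2 : SimpleGraph V2)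
    (S : Set {p : V1 × V2 // t1 p.1 = t2 p.2}) :
    commonNbrs (partiteProd t1 t2 G1 G2) S =
      {x | x.val.1 ∈ commonNbrs G1 ((fun p => p.val.1) '' S) ∧
           x.val.2 ∈ commonNbrs G2 ((fun p => p.val.2) '' S)} ∧
    ∀ x y, x ∈ commonNbrs (partiteProd t1 t2 G1 G2) S →
      y ∈ commonNbrs (partiteProd t1 t2 G1 G2) S →
      ((partiteProd t1 t2 G1 G2).Adj x y ↔ G1.Adj x.val.1 y.val.1 ∧ G2.Adj x.val.2 y.val.2) :=
  ⟨commonNbrs_partiteProd t1 t2 G1 G2 S, fun _ _ _ _ => partiteProd_adj⟩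

/-- For `n`-partite graphs `G1`, `G2` and a clique `S` in `G1 ⊛ G2`, the link of `S` equals the
partite product of the links of the projections of `S`: the vertex sets coincide and the induced
adjacency is exactly the product adjacency. -/
theorem stmt2 {V1 V2 : Type*} (nn : ℕ) (t1 : V1 → Fin nn) (t2 : V2 → Fin nn)
    (G1 : SimpleGraph V1) (G2 : SimpleGraph V2)
    (hp1 : ∀ a b, G1.Adj a b → t1 a ≠ t1 b) (hp2 : ∀ a b, G2.Adj a b → t2 a ≠ t2 b)
    (S : Set {p : V1 × V2 // t1 p.1 = t2 p.2})
    (hS : (partiteProd t1 t2 G1 G2).IsClique S) :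
    commonNbrs (partiteProd t1 t2 G1 G2) S =
      {x | x.val.1 ∈ commonNbrs G1 ((fun p => p.val.1) '' S) ∧
           x.val.2 ∈ commonNbrs G2 ((fun p => p.val.2) '' S)} ∧
    ∀ x y, x ∈ commonNbrs (partiteProd t1 t2 G1 G2) S →
      y ∈ commonNbrs (partiteProd t1 t2 G1 G2) S →
      ((partiteProd t1 t2 G1 G2).Adj x y ↔ G1.Adj x.val.1 y.val.1 ∧ G2.Adj x.val.2 y.val.2) :=
  stmt2_general nn t1 t2 G1 G2 S
end

section
/- If an (n+1)-partite graph G (with parts indexed by I = {0,...,n}) is (d_J)-partite type-regular, then the symmetrized product G^{⊛ S_{n+1}} = ⊛_{π ∈ S_{n+1}} π(G) is hyper-regular: for every 1 ≤ m ≤ n, all m-cliques in G^{⊛ S_{n+1}} have links of the same size, namely Σ_{i ∈ I\J} Π_{π ∈ S_I} d_{π(J)}(π(i)) is independent of the choice of the m-element subset J ⊂ I. -/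
/-- Vertices of the symmetrized product `G^{⊛ S_{n+1}}`: a vertex of type `i` is a tuple,
indexed by the permutations `π` of the parts, of vertices of `G` whose `π`-component lies in
part `π i`. -/
def SymV (n : ℕ) (V : Type*) (t : V → Fin (n + 1)) : Type _ :=
  {p : (Equiv.Perm (Fin (n + 1)) → V) × Fin (n + 1) // ∀ π, t (p.1 π) = π p.2}

/-- The symmetrized product graph `⊛_{π ∈ S_{n+1}} π(G)`: two tuples are adjacent iff they are
adjacent in `G` coordinatewise. -/
def symGraph {n : ℕ} {V : Type*} (t : V → Fin (n + 1)) (G : SimpleGraph V) :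
    SimpleGraph (SymV n V t) where
  Adj x y := ∀ π : Equiv.Perm (Fin (n + 1)), G.Adj (x.val.1 π) (y.val.1 π)
  symm := ⟨fun _ _ h π => (h π).symm⟩
  loopless := ⟨fun _ h => G.irrefl (h 1)⟩


/-! In the symmetrized product, a vertex of type `i` in the link of a clique `S` of type `J` is a
tuple whose `π`-th coordinate lies in part `π i` of the link, in `G`, of the `π`-th projection of
`S`, a clique of type `π(J)`. So the link is a disjoint union over `i ∉ J` of products of sets of
sizes `d_{π(J)}(π i)`. Precomposing `π` with the transposition `(i i')` turns the product for `i`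
into the product for `i'`; all summands are thus equal, which also settles the case of an infinite
link, where `ncard` is `0`. -/

/-- Right multiplication by the transposition `swap i j` fixes `s.image π` when `i, j ∉ s`, and
moves `π i` to `π j`. -/
theorem Finset.prod_perm_image_apply_eq {α M : Type*} [DecidableEq α] [Fintype α] [CommMonoid M]
    (f : Finset α → α → M) {s : Finset α} {i j : α} (hi : i ∉ s) (hj : j ∉ s) :
    ∏ π : Equiv.Perm α, f (s.image π) (π i) = ∏ π : Equiv.Perm α, f (s.image π) (π j) := by
  refine Fintype.prod_equiv (Equiv.mulRight (Equiv.swap i j)) _ _ fun π => ?_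
  have hswap : s.image (Equiv.swap i j) = s := by
    refine (Finset.image_congr fun k hk => ?_).trans Finset.image_id
    exact Equiv.swap_apply_of_ne_of_ne (ne_of_mem_of_not_mem hk hi) (ne_of_mem_of_not_mem hk hj)
  simp only [Equiv.coe_mulRight, Equiv.Perm.coe_mul, ← Finset.image_image, hswap,
    Function.comp_apply, Equiv.swap_apply_right]

/-- If one fiber is infinite, all fibers have `Nat.card` zero, and so does the sigma type. -/
theorem Nat.card_sigma_of_card_eq {ι : Type*} [Fintype ι] {β : ι → Type*}
    (h : ∀ i j, Nat.card (β i) = Nat.card (β j)) :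
    Nat.card (Σ i, β i) = ∑ i, Nat.card (β i) := by
  by_cases hfin : ∀ i, Finite (β i)
  · exact Nat.card_sigma
  · simp only [not_forall, not_finite_iff_infinite] at hfin
    obtain ⟨i₀, hi₀⟩ := hfin
    have hzero : ∀ i, Nat.card (β i) = 0 := fun i => (h i i₀).trans (Nat.card_eq_zero_of_infinite)
    have : Infinite (Σ i, β i) := Infinite.of_injective (Sigma.mk i₀) sigma_mk_injective
    simp only [hzero, Finset.sum_const_zero, Nat.card_eq_zero_of_infinite]

namespace SymV

variable {n : ℕ} {V : Type*} {t : V → Fin (n + 1)} {G : SimpleGraph V}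

def types (S : Finset (SymV n V t)) : Finset (Fin (n + 1)) :=
  S.image fun x => x.val.2

theorem type_notMem_types_of_mem_commonNbrs (hp : ∀ a b, G.Adj a b → t a ≠ t b)
    {S : Finset (SymV n V t)} {y : SymV n V t}
    (hy : y ∈ commonNbrs (symGraph t G) (S : Set (SymV n V t))) :
    y.val.2 ∉ types S := by
  simp only [types, Finset.mem_image]
  rintro ⟨x, hx, hxy⟩
  have := hp _ _ (hy x hx 1)
  rw [x.prop 1, y.prop 1, hxy] at this
  exact this rfl

variable [DecidableEq V]

def coordImage (S : Finset (SymV n V t)) (π : Equiv.Perm (Fin (n + 1))) : Finset V :=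
  S.image fun x => x.val.1 π

theorem isClique_coordImage {S : Finset (SymV n V t)}
    (hS : (symGraph t G).IsClique (S : Set (SymV n V t))) (π : Equiv.Perm (Fin (n + 1))) :
    G.IsClique (coordImage S π : Set V) := by
  rintro _ hu _ hv hne
  simp only [coordImage, Finset.coe_image, Set.mem_image, Finset.mem_coe] at hu hv
  obtain ⟨x, hx, rfl⟩ := hu
  obtain ⟨y, hy, rfl⟩ := hv
  exact hS hx hy (fun h => hne (h ▸ rfl)) π

theorem card_coordImage {S : Finset (SymV n V t)}
    (hS : (symGraph t G).IsClique (S : Set (SymV n V t))) (π : Equiv.Perm (Fin (n + 1))) :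
    (coordImage S π).card = S.card :=
  Finset.card_image_of_injOn fun _ hx _ hy hxy =>
    of_not_not fun hne => (hS hx hy hne π).ne hxy

theorem exists_mem_coordImage_of_mem_image_types {S : Finset (SymV n V t)}
    {π : Equiv.Perm (Fin (n + 1))} {j : Fin (n + 1)} (hj : j ∈ (types S).image π) :
    ∃ v ∈ coordImage S π, t v = j := by
  simp only [types, Finset.image_image, Finset.mem_image, Function.comp_apply] at hj
  obtain ⟨x, hx, rfl⟩ := hj
  exact ⟨x.val.1 π, Finset.mem_image_of_mem _ hx, x.prop π⟩

theorem mem_commonNbrs_symGraph {S : Finset (SymV n V t)} {y : SymV n V t} :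
    y ∈ commonNbrs (symGraph t G) (S : Set (SymV n V t)) ↔
      ∀ π, y.val.1 π ∈ commonNbrs G (coordImage S π : Set V) := by
  simp only [commonNbrs, coordImage, Set.mem_ofPred_eq, Finset.coe_image, Set.forall_mem_image,
    Finset.mem_coe, symGraph]
  exact ⟨fun h π _ hx => h _ hx π, fun h _ hx π => h π hx⟩

def commonNbrsEquiv (hp : ∀ a b, G.Adj a b → t a ≠ t b) (S : Finset (SymV n V t)) :
    commonNbrs (symGraph t G) (S : Set (SymV n V t)) ≃
      Σ i : ↥(Finset.univ \ types S), ∀ π : Equiv.Perm (Fin (n + 1)),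
        ↥{v | v ∈ commonNbrs G (coordImage S π : Set V) ∧ t v = π i} where
  toFun y := ⟨⟨y.val.val.2, Finset.mem_sdiff.2
      ⟨Finset.mem_univ _, type_notMem_types_of_mem_commonNbrs hp y.prop⟩⟩,
    fun π => ⟨y.val.val.1 π, mem_commonNbrs_symGraph.1 y.prop π, y.val.prop π⟩⟩
  invFun z := ⟨⟨⟨fun π => (z.2 π).val, z.1.val⟩, fun π => (z.2 π).prop.2⟩,
    mem_commonNbrs_symGraph.2 fun π => (z.2 π).prop.1⟩
  left_inv _ := rfl
  right_inv _ := rfl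

end SymV

open SymV in
/-- If the `(n+1)`-partite graph `G` is `(d_J)`-partite type-regular, then its symmetrization
`G^{⊛ S_{n+1}}` is hyper-regular: for every `1 ≤ m ≤ n`, every `m`-clique of type `J` has a link
of size `Σ_{i ∈ I\J} Π_{π ∈ S_I} d_{π(J)}(π(i))`, a quantity independent of the `m`-subset `J`. -/
theorem stmt5 {V : Type*} (n : ℕ) (t : V → Fin (n + 1)) (G : SimpleGraph V)
    (hp : ∀ a b, G.Adj a b → t a ≠ t b)
    (d : Finset (Fin (n + 1)) → Fin (n + 1) → ℕ)
    (htr : ∀ J : Finset (Fin (n + 1)), J ⊂ Finset.univ →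
      ∀ C : Finset V, G.IsClique (C : Set V) → C.card = J.card →
        (∀ j ∈ J, ∃ v ∈ C, t v = j) →
        ∀ i ∈ Finset.univ \ J,
          {v | v ∈ commonNbrs G (C : Set V) ∧ t v = i}.ncard = d J i) :
    ∀ m, 1 ≤ m → m ≤ n → ∀ J : Finset (Fin (n + 1)), J.card = m →
      ∀ S : Finset (SymV n V t), (symGraph t G).IsClique (S : Set (SymV n V t)) →
        S.card = m → S.image (fun x => x.val.2) = J →
          (commonNbrs (symGraph t G) (S : Set (SymV n V t))).ncard =
            ∑ i ∈ Finset.univ \ J, ∏ π : Equiv.Perm (Fin (n + 1)), d (J.image π) (π i) := by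
  intro m _ hmn J hJ S hS hSm hSJ
  classical
  change types S = J at hSJ
  subst hSJ
  have hfiber : ∀ i ∈ Finset.univ \ types S, Nat.card (∀ π : Equiv.Perm (Fin (n + 1)),
      ↥{v | v ∈ commonNbrs G (coordImage S π : Set V) ∧ t v = π i}) =
        ∏ π : Equiv.Perm (Fin (n + 1)), d ((types S).image π) (π i) := by
    intro i hi
    rw [Nat.card_pi]
    refine Finset.prod_congr rfl fun π _ => ?_
    have hcard : ((types S).image π).card = m := by
      rw [Finset.card_image_of_injective _ π.injective, hJ]
    rw [Nat.card_coe_set_eq]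
    refine htr _ ?_ _ (isClique_coordImage hS π) ?_
      (fun _ => exists_mem_coordImage_of_mem_image_types) _ ?_
    · refine Finset.ssubset_univ_iff.2 fun h => ?_
      rw [h, Finset.card_univ, Fintype.card_fin] at hcard
      omega
    · rw [card_coordImage hS, hSm, hcard]
    · simpa [Finset.mem_sdiff] using hi
  rw [← Nat.card_coe_set_eq, Nat.card_congr (commonNbrsEquiv hp S), Nat.card_sigma_of_card_eq,
    ← Finset.sum_coe_sort (Finset.univ \ types S)]
  · exact Finset.sum_congr rfl fun i _ => hfiber i i.prop
  · intro i j
    rw [hfiber i i.prop, hfiber j j.prop]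
    exact Finset.prod_perm_image_apply_eq _ (Finset.mem_sdiff.1 i.prop).2
      (Finset.mem_sdiff.1 j.prop).2
end

section
/- For every k ≥ 1, the reduction map φ: S̃_n → S̃_n(k), sending [a_1,...,a_n] to [a_1 mod kn, ..., a_n mod kn], is a surjective group homomorphism, its kernel N intersects each maximal parabolic subgroup K_{{i}} = ⟨{s̃_j : j ≠ i}⟩ trivially, and |S̃_n(k)| = k^{n-1}·n!. -/
/-- The standard generating family `s̃_0, …, s̃_{n-1}` of the affine permutation group `S̃_n`. -/
def stdGens (n : ℕ) (s : Fin n → Equiv.Perm ℤ) : Prop :=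
  ∀ i : Fin n, ∀ j : ℤ,
    s i j = if (j : ZMod n) = ((i : ℕ) : ZMod n) then j + 1
      else if (j : ZMod n) = ((i : ℕ) : ZMod n) + 1 then j - 1 else j

/-!
Both `ℤ` and `ℤ_{kn}` are commutative rings `R` with a reduction `π : R → ℤ_n` whose kernel is
`nR`. An `n`-periodic permutation `u` of such an `R` is determined by the permutation it induces
on residues mod `n` together with its displacements `u r - r` at representatives `r` of the
residues. The sum `∑ (u r - r)` is additive under composition, so the affine permutations
(those where it vanishes, which is the condition `∑ u i = n(n+1)/2`) form a subgroup; sending `u`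
to its residue permutation is onto `S_n`, and its kernel consists of the translations by
zero-sum vectors in `(nℤ_{kn})^n ≅ ℤ_k^n`, whence `|S̃_n(k)| = k^{n-1} n!`. Reduction mod `kn`
respects residues and displacements, and an affine permutation of `ℤ_{kn}` lifts by lifting its
displacements to integers, correcting one of them by a multiple of `kn` so that they still sum
to zero. Finally, `K_{i}` preserves every window `{i+1+tn, …, i+n+tn}`, so its elements move
integers by less than `n ≤ kn`, whereas elements of the kernel move them by multiples of `kn`.
-/

open Finset

namespace Int

theorem ediv_add_one_of_not_dvd {a b : ℤ} (hb : 0 < b) (h : ¬ b ∣ a + 1) :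
    (a + 1) / b = a / b := by
  rw [Int.ediv_eq_iff_of_pos hb]
  have h₁ := Int.ediv_mul_le a hb.ne'
  have h₂ := Int.lt_ediv_add_one_mul_self a hb
  exact ⟨by linarith, lt_of_le_of_ne (by linarith) fun heq => h ⟨a / b + 1, by linarith⟩⟩

theorem abs_sub_lt_of_ediv_eq {a b c : ℤ} (hc : 0 < c) (h : a / c = b / c) : |a - b| < c := by
  have ha := Int.mul_ediv_add_emod a c
  have hb := Int.mul_ediv_add_emod b c
  rw [h] at ha
  rw [abs_sub_lt_iff]
  constructor <;> linarith [Int.emod_nonneg a hc.ne', Int.emod_lt_of_pos a hc,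
    Int.emod_nonneg b hc.ne', Int.emod_lt_of_pos b hc]

theorem sum_Icc_one_natCast {M : Type*} [AddCommMonoid M] (n : ℕ) (f : ℤ → M) :
    ∑ i ∈ Icc (1 : ℤ) n, f i = ∑ i ∈ Icc 1 n, f i := by
  rw [show Icc (1 : ℤ) n = (Icc 1 n).map Nat.castEmbedding from ?_, sum_map]
  · rfl
  ext x
  simp only [mem_Icc, mem_map, Nat.castEmbedding_apply]
  constructor
  · intro hx
    exact ⟨x.toNat, by omega, by omega⟩
  · rintro ⟨a, ha, rfl⟩
    omega

end Int

theorem sum_Icc_one_id (n : ℕ) : ∑ i ∈ Icc 1 n, i = (n + 1).choose 2 := by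
  rw [Nat.choose_two_right, ← sum_range_id, range_eq_Ico, sum_eq_sum_Ico_succ_bot n.add_one_pos,
    zero_add, ← Ico_add_one_right_eq_Icc, zero_add]

theorem sum_range_natCast_zmod {M : Type*} [AddCommMonoid M] (n : ℕ) [NeZero n]
    (g : ZMod n → M) : ∑ i ∈ range n, g i = ∑ r, g r :=
  sum_nbij' (↑) ZMod.val (fun _ _ => mem_univ _) (fun r _ => mem_range.2 r.val_lt)
    (fun _ hi => ZMod.val_cast_of_lt (mem_range.1 hi)) (fun r _ => ZMod.natCast_zmod_val r)
    fun _ _ => rfl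

theorem sum_Icc_one_natCast_zmod {M : Type*} [AddCommMonoid M] (n : ℕ) [NeZero n]
    (g : ZMod n → M) : ∑ i ∈ Icc 1 n, g i = ∑ r, g r := by
  rw [← Ico_add_one_right_eq_Icc, ← zero_add 1, ← sum_Ico_add', ← range_eq_Ico]
  push_cast
  rw [sum_range_natCast_zmod n (fun r => g (r + 1))]
  exact Fintype.sum_equiv (Equiv.addRight 1) _ _ fun _ => rfl

theorem card_subtype_sum_eq_zero {ι K : Type*} [Fintype ι] [Nonempty ι] [AddCommGroup K]
    [Finite K] : Nat.card {e : ι → K // ∑ i, e i = 0} = Nat.card K ^ (Fintype.card ι - 1) := by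
  classical
  let f : (ι → K) →+ K :=
    { toFun := fun e => ∑ i, e i
      map_zero' := sum_const_zero
      map_add' := fun _ _ => sum_add_distrib }
  have hf : Function.Surjective f := fun k => ⟨Pi.single (Classical.arbitrary ι) k, by simp [f]⟩
  have h := AddSubgroup.card_mul_index f.ker
  rw [AddSubgroup.index_ker, AddMonoidHom.range_eq_top.2 hf, AddSubgroup.card_top, Nat.card_fun,
    Nat.card_eq_fintype_card (α := ι), ← Nat.sub_add_cancel Fintype.card_pos, pow_succ] at h
  exact Nat.eq_of_mul_eq_mul_right Nat.card_pos h

theorem ZMod.card_ker_castHom (n k : ℕ) [NeZero n] :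
    Nat.card (RingHom.ker (ZMod.castHom (dvd_mul_left n k) (ZMod n))) = k := by
  set π := ZMod.castHom (dvd_mul_left n k) (ZMod n)
  have h := AddSubgroup.card_mul_index π.toAddMonoidHom.ker
  rw [AddSubgroup.index_ker,
    AddMonoidHom.range_eq_top.2 (ZMod.castHom_surjective (dvd_mul_left n k)),
    AddSubgroup.card_top, Nat.card_zmod, Nat.card_zmod] at h
  exact Nat.eq_of_mul_eq_mul_right (NeZero.pos n) h

theorem Fin.natCast_zmod_ne_of_ne {n : ℕ} {i j : Fin n} (h : j ≠ i) :
    ((j : ℕ) : ZMod n) ≠ (i : ℕ) := by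
  have : NeZero n := ⟨i.pos.ne'⟩
  intro hji
  have := congrArg ZMod.val hji
  rw [ZMod.val_cast_of_lt j.isLt, ZMod.val_cast_of_lt i.isLt] at this
  exact h (Fin.ext this)

namespace AffinePerm

section Periodic

variable {G : Type*} [AddGroup G]

def periodicPerms (c : G) : Subgroup (Equiv.Perm G) :=
  Subgroup.centralizer {Equiv.addRight c}

theorem mem_periodicPerms {c : G} {u : Equiv.Perm G} :
    u ∈ periodicPerms c ↔ ∀ x, u (x + c) = u x + c := by
  rw [periodicPerms, Subgroup.mem_centralizer_singleton_iff, Equiv.ext_iff]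
  rfl

theorem apply_add_of_mem_zmultiples {c : G} {u : Equiv.Perm G} (hu : u ∈ periodicPerms c)
    (x : G) {y : G} (hy : y ∈ AddSubgroup.zmultiples c) : u (x + y) = u x + y := by
  obtain ⟨m, rfl⟩ := AddSubgroup.mem_zmultiples_iff.1 hy
  have h : Commute u (Equiv.addRight c) := Subgroup.mem_centralizer_singleton_iff.1 hu
  have h' := (h.zpow_right m).eq
  rw [Equiv.zsmul_addRight] at h'
  exact DFunLike.congr_fun h' x

theorem periodicPerms_le {c d : G} (hd : d ∈ AddSubgroup.zmultiples c) :
    periodicPerms c ≤ periodicPerms d := fun _ hu =>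
  mem_periodicPerms.2 fun x => apply_add_of_mem_zmultiples hu x hd

end Periodic

section Residue

variable {R : Type*} [CommRing R] (n : ℕ) [NeZero n]

def displacement (u : Equiv.Perm R) (r : ZMod n) : R := u r.val - r.val

def totalDisplacement (u : Equiv.Perm R) : R := ∑ r : ZMod n, displacement n u r

variable {n} {π : R →+* ZMod n}

theorem map_natCast_val (π : R →+* ZMod n) (r : ZMod n) : π r.val = r := by
  rw [map_natCast, ZMod.natCast_zmod_val]

def residue (π : R →+* ZMod n) (u : Equiv.Perm R) (r : ZMod n) : ZMod n := π (u r.val)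

theorem residue_eq_add (u : Equiv.Perm R) (r : ZMod n) :
    residue π u r = r + π (displacement n u r) := by
  rw [displacement, map_sub, map_natCast_val, add_sub_cancel, residue]

theorem totalDisplacement_one : totalDisplacement n (1 : Equiv.Perm R) = 0 := by
  simp [totalDisplacement, displacement]

variable (hπ : ∀ y, π y = 0 → y ∈ AddSubgroup.zmultiples (n : R))
include hπ

theorem apply_eq_add_displacement {u : Equiv.Perm R} (hu : u ∈ periodicPerms (n : R)) (x : R) :
    u x = x + displacement n u (π x) := by
  have hy : x - (π x).val ∈ AddSubgroup.zmultiples (n : R) :=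
    hπ _ (by rw [map_sub, map_natCast_val, sub_self])
  have h := apply_add_of_mem_zmultiples hu ((π x).val) hy
  rw [add_sub_cancel] at h
  rw [h, displacement]
  ring

theorem residue_map {u : Equiv.Perm R} (hu : u ∈ periodicPerms (n : R)) (x : R) :
    residue π u (π x) = π (u x) := by
  rw [residue_eq_add, apply_eq_add_displacement hπ hu x, map_add]

theorem residue_residue_inv {u : Equiv.Perm R} (hu : u ∈ periodicPerms (n : R)) (r : ZMod n) :
    residue π u (residue π u⁻¹ r) = r := by
  rw [show residue π u⁻¹ r = π (u⁻¹ r.val) from rfl, residue_map hπ hu, Equiv.Perm.coe_inv,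
    Equiv.apply_symm_apply, map_natCast_val]

def residueHom : periodicPerms (n : R) →* Equiv.Perm (ZMod n) :=
  MonoidHom.mk'
    (fun u =>
      { toFun := residue π u
        invFun := residue π (u : Equiv.Perm R)⁻¹
        left_inv := fun r => by simpa using residue_residue_inv hπ (inv_mem u.2) r
        right_inv := residue_residue_inv hπ u.2 })
    fun u v => by
      ext r
      simp only [Equiv.coe_fn_mk, Equiv.Perm.coe_mul, Function.comp_apply]
      rw [residue, Subgroup.coe_mul, Equiv.Perm.mul_apply, ← residue_map hπ u.2]
      rfl

theorem residueHom_apply (u : periodicPerms (n : R)) (r : ZMod n) :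
    residueHom hπ u r = residue π u r := rfl

theorem displacement_mul {u : Equiv.Perm R} (hu : u ∈ periodicPerms (n : R)) (v : Equiv.Perm R)
    (r : ZMod n) :
    displacement n (u * v) r = displacement n u (residue π v r) + displacement n v r := by
  rw [displacement, Equiv.Perm.mul_apply, apply_eq_add_displacement hπ hu (v r.val)]
  simp only [displacement, residue]
  ring

theorem totalDisplacement_mul {u v : Equiv.Perm R} (hu : u ∈ periodicPerms (n : R))
    (hv : v ∈ periodicPerms (n : R)) :
    totalDisplacement n (u * v) = totalDisplacement n u + totalDisplacement n v := by
  simp_rw [totalDisplacement, displacement_mul hπ hu v, sum_add_distrib,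
    ← residueHom_apply hπ ⟨v, hv⟩, Equiv.sum_comp]

def affinePerms : Subgroup (Equiv.Perm R) where
  carrier := {u | u ∈ periodicPerms (n : R) ∧ totalDisplacement n u = 0}
  one_mem' := ⟨one_mem _, totalDisplacement_one⟩
  mul_mem' := fun ⟨hu, hu₀⟩ ⟨hv, hv₀⟩ =>
    ⟨mul_mem hu hv, by rw [totalDisplacement_mul hπ hu hv, hu₀, hv₀, add_zero]⟩
  inv_mem' := fun {u} ⟨hu, hu₀⟩ => ⟨inv_mem hu, by
    have h := totalDisplacement_mul hπ (inv_mem hu) hu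
    rwa [inv_mul_cancel, totalDisplacement_one, hu₀, add_zero, eq_comm] at h⟩

theorem mem_affinePerms {u : Equiv.Perm R} :
    u ∈ affinePerms hπ ↔ u ∈ periodicPerms (n : R) ∧ totalDisplacement n u = 0 := Iff.rfl

theorem sum_Icc_apply {u : Equiv.Perm R} (hu : u ∈ periodicPerms (n : R)) :
    ∑ i ∈ Icc 1 n, u i = ((n + 1).choose 2 : ℕ) + totalDisplacement n u := by
  simp_rw [apply_eq_add_displacement hπ hu, map_natCast, sum_add_distrib]
  rw [← Nat.cast_sum, sum_Icc_one_id, totalDisplacement,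
    sum_Icc_one_natCast_zmod n (displacement n u)]

theorem mem_affinePerms_iff {u : Equiv.Perm R} :
    u ∈ affinePerms hπ ↔
      (∀ x, u (x + n) = u x + n) ∧ ∑ i ∈ Icc 1 n, u i = ((n + 1).choose 2 : ℕ) := by
  rw [mem_affinePerms, ← mem_periodicPerms]
  refine and_congr_right fun hu => ?_
  rw [sum_Icc_apply hπ hu, add_eq_left]

end Residue

section OfDisplacement

variable {R : Type*} [CommRing R] {n : ℕ} {π : R →+* ZMod n}
  (D : ZMod n → R) {σ : Equiv.Perm (ZMod n)} (hσ : ∀ r, σ r = r + π (D r))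

def ofDisplacement : Equiv.Perm R where
  toFun x := x + D (π x)
  invFun y := y - D (σ.symm (π y))
  left_inv x := by
    have h : π (x + D (π x)) = σ (π x) := by rw [map_add, hσ]
    simp only [h, Equiv.symm_apply_apply, add_sub_cancel_right]
  right_inv y := by
    have h : π (y - D (σ.symm (π y))) = σ.symm (π y) := by
      have h' := hσ (σ.symm (π y))
      rw [Equiv.apply_symm_apply] at h'
      rw [map_sub]
      exact sub_eq_iff_eq_add.2 h'
    simp only [h, sub_add_cancel]

theorem ofDisplacement_apply (x : R) : ofDisplacement D hσ x = x + D (π x) := rfl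

theorem ofDisplacement_mem_periodicPerms : ofDisplacement D hσ ∈ periodicPerms (n : R) :=
  mem_periodicPerms.2 fun x => by
    simp only [ofDisplacement_apply, map_add, map_natCast, ZMod.natCast_self, add_zero]
    ring

theorem one_apply_eq_add_of_mem_ker (e : ZMod n → RingHom.ker π) (r : ZMod n) :
    (1 : Equiv.Perm (ZMod n)) r = r + π (e r) := by
  rw [Equiv.Perm.one_apply, RingHom.mem_ker.1 (e r).2, add_zero]

variable [NeZero n]

theorem displacement_ofDisplacement : displacement n (ofDisplacement D hσ) = D :=
  funext fun r => by rw [displacement, ofDisplacement_apply, map_natCast_val, add_sub_cancel_left]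

theorem residue_ofDisplacement : residue π (ofDisplacement D hσ) = σ :=
  funext fun r => by rw [residue_eq_add, displacement_ofDisplacement, hσ]

theorem ofDisplacement_mem_affinePerms (hπ : ∀ y, π y = 0 → y ∈ AddSubgroup.zmultiples (n : R))
    (hD : ∑ r, D r = 0) : ofDisplacement D hσ ∈ affinePerms hπ :=
  ⟨ofDisplacement_mem_periodicPerms D hσ, by
    rw [totalDisplacement, displacement_ofDisplacement, hD]⟩

theorem ofDisplacement_displacement (hπ : ∀ y, π y = 0 → y ∈ AddSubgroup.zmultiples (n : R))
    {u : Equiv.Perm R} (hu : u ∈ periodicPerms (n : R))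
    (hσ : ∀ r, σ r = r + π (displacement n u r)) : ofDisplacement (displacement n u) hσ = u :=
  Equiv.ext fun x => (apply_eq_add_displacement hπ hu x).symm

end OfDisplacement

section Card

variable {R : Type*} [CommRing R] {n : ℕ} [NeZero n] {π : R →+* ZMod n}
  (hπ : ∀ y, π y = 0 → y ∈ AddSubgroup.zmultiples (n : R))

def affineResidueHom : affinePerms hπ →* Equiv.Perm (ZMod n) :=
  (residueHom hπ).comp (Subgroup.inclusion fun _ hu => hu.1)

theorem affineResidueHom_apply (u : affinePerms hπ) (r : ZMod n) :
    affineResidueHom hπ u r = residue π u r := rfl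

theorem affineResidueHom_surjective : Function.Surjective (affineResidueHom hπ) := fun σ => by
  let D : ZMod n → R := fun r => (σ r).val - r.val
  have hσ : ∀ r, σ r = r + π (D r) := fun r => by
    simp only [D, map_sub, map_natCast_val, add_sub_cancel]
  have hD : ∑ r, D r = 0 := by
    simp only [D, sum_sub_distrib]
    rw [Equiv.sum_comp σ (fun r => ((r.val : ℕ) : R)), sub_self]
  exact ⟨⟨_, ofDisplacement_mem_affinePerms D hσ hπ hD⟩,
    Equiv.ext fun r => congrFun (residue_ofDisplacement D hσ) r⟩

theorem map_displacement_eq_zero {u : affinePerms hπ} (hu : u ∈ (affineResidueHom hπ).ker)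
    (r : ZMod n) : π (displacement n u r) = 0 := by
  have h := DFunLike.congr_fun (MonoidHom.mem_ker.1 hu) r
  rw [affineResidueHom_apply, residue_eq_add, Equiv.Perm.one_apply] at h
  exact add_eq_left.1 h

def kerAffineResidueHomEquiv :
    (affineResidueHom hπ).ker ≃ {e : ZMod n → RingHom.ker π // ∑ r, e r = 0} where
  toFun u := ⟨fun r => ⟨displacement n u r, map_displacement_eq_zero hπ u.2 r⟩,
    Subtype.ext (by simpa [totalDisplacement] using (u : affinePerms hπ).2.2)⟩
  invFun e := ⟨⟨ofDisplacement _ (one_apply_eq_add_of_mem_ker e.1),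
    ofDisplacement_mem_affinePerms _ _ hπ (by simpa using congrArg Subtype.val e.2)⟩,
    MonoidHom.mem_ker.2 <| Equiv.ext fun r =>
      congrFun (residue_ofDisplacement _ (one_apply_eq_add_of_mem_ker e.1)) r⟩
  left_inv u := Subtype.ext <| Subtype.ext <| ofDisplacement_displacement hπ u.1.2.1 <|
    one_apply_eq_add_of_mem_ker fun r => ⟨_, map_displacement_eq_zero hπ u.2 r⟩
  right_inv e := Subtype.ext <| funext fun r => Subtype.ext <|
    congrFun (displacement_ofDisplacement _ (one_apply_eq_add_of_mem_ker e.1)) r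

theorem card_affinePerms [Finite (RingHom.ker π)] :
    Nat.card (affinePerms hπ) = Nat.card (RingHom.ker π) ^ (n - 1) * n.factorial := by
  have h := Subgroup.card_mul_index (affineResidueHom hπ).ker
  rw [Subgroup.index_ker, MonoidHom.range_eq_top.2 (affineResidueHom_surjective hπ),
    Subgroup.card_top, Nat.card_perm, Nat.card_zmod, Nat.card_congr (kerAffineResidueHomEquiv hπ),
    card_subtype_sum_eq_zero, ZMod.card] at h
  exact h.symm

end Card

section Reduction

theorem mem_zmultiples_of_intCast_eq_zero (n : ℕ) :
    ∀ y, Int.castRingHom (ZMod n) y = 0 → y ∈ AddSubgroup.zmultiples (n : ℤ) := fun y hy =>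
  Int.mem_zmultiples_iff.2 ((ZMod.intCast_zmod_eq_zero_iff_dvd y n).1 hy)

theorem mem_zmultiples_of_castHom_eq_zero {n N : ℕ} (h : n ∣ N) :
    ∀ y, ZMod.castHom h (ZMod n) y = 0 → y ∈ AddSubgroup.zmultiples (n : ZMod N) := by
  intro y hy
  obtain ⟨j, rfl⟩ := ZMod.intCast_surjective y
  rw [map_intCast, ZMod.intCast_zmod_eq_zero_iff_dvd] at hy
  obtain ⟨m, rfl⟩ := hy
  exact ⟨m, by push_cast; ring⟩

variable {N : ℕ}

theorem intCast_apply_eq {u : Equiv.Perm ℤ} (hu : u ∈ periodicPerms (N : ℤ)) {a b : ℤ}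
    (h : (a : ZMod N) = b) : (u a : ZMod N) = u b := by
  have hy : b - a ∈ AddSubgroup.zmultiples (N : ℤ) :=
    Int.mem_zmultiples_iff.2 ((ZMod.intCast_eq_intCast_iff_dvd_sub a b N).1 h)
  have hb := apply_add_of_mem_zmultiples hu a hy
  rw [add_sub_cancel] at hb
  rw [hb]
  push_cast
  rw [h, sub_self, add_zero]

variable (N) in
def reduceHom : periodicPerms (N : ℤ) →* Equiv.Perm (ZMod N) :=
  MonoidHom.mk'
    (fun u =>
      { toFun := fun x => ((u : Equiv.Perm ℤ) x.cast : ZMod N)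
        invFun := fun x => ((u : Equiv.Perm ℤ)⁻¹ x.cast : ZMod N)
        left_inv := fun x => by
          dsimp only
          rw [intCast_apply_eq (inv_mem u.2) (ZMod.intCast_zmod_cast _)]
          simp
        right_inv := fun x => by
          dsimp only
          rw [intCast_apply_eq u.2 (ZMod.intCast_zmod_cast _)]
          simp })
    fun u _ => Equiv.ext fun _ => intCast_apply_eq u.2 (ZMod.intCast_zmod_cast _).symm

theorem reduceHom_intCast (u : periodicPerms (N : ℤ)) (j : ℤ) :
    reduceHom N u j = ((u : Equiv.Perm ℤ) j : ZMod N) :=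
  intCast_apply_eq u.2 (ZMod.intCast_zmod_cast _)

variable {n : ℕ}

theorem reduceHom_mem_periodicPerms {u : periodicPerms (N : ℤ)}
    (hu : (u : Equiv.Perm ℤ) ∈ periodicPerms (n : ℤ)) :
    reduceHom N u ∈ periodicPerms (n : ZMod N) :=
  mem_periodicPerms.2 fun x => by
    obtain ⟨j, rfl⟩ := ZMod.intCast_surjective x
    have h := congrArg (Int.cast : ℤ → ZMod N) (mem_periodicPerms.1 hu j)
    have hx : (j : ZMod N) + n = ((j + n : ℤ) : ZMod N) := by push_cast; rfl
    push_cast at h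
    rw [hx, reduceHom_intCast, reduceHom_intCast, h]

variable [NeZero n]

theorem totalDisplacement_reduceHom (u : periodicPerms (N : ℤ)) :
    totalDisplacement n (reduceHom N u) =
      ((totalDisplacement n (u : Equiv.Perm ℤ) : ℤ) : ZMod N) := by
  simp only [totalDisplacement, displacement, Int.cast_sum, Int.cast_sub, Int.cast_natCast]
  refine sum_congr rfl fun r _ => ?_
  rw [← Int.cast_natCast (R := ZMod N), reduceHom_intCast]

/-- Integer lifts of the displacements of `v`, the one at `0` shifted so that they sum to zero. -/
def liftDisplacement (v : Equiv.Perm (ZMod N)) (r : ZMod n) : ℤ :=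
  (displacement n v r).cast - (Pi.single 0 (∑ s, ((displacement n v s).cast : ℤ)) : ZMod n → ℤ) r

theorem sum_liftDisplacement (v : Equiv.Perm (ZMod N)) :
    ∑ r : ZMod n, liftDisplacement v r = 0 := by
  simp [liftDisplacement, sum_sub_distrib]

theorem intCast_liftDisplacement {v : Equiv.Perm (ZMod N)} (hv : totalDisplacement n v = 0)
    (r : ZMod n) : (liftDisplacement v r : ZMod N) = displacement n v r := by
  rw [liftDisplacement, Int.cast_sub, ZMod.intCast_zmod_cast, sub_eq_self]
  rcases eq_or_ne r 0 with rfl | hr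
  · simpa [totalDisplacement] using hv
  · simp [hr]

variable (hnN : n ∣ N)

include hnN in
theorem affinePerms_le_periodicPerms :
    affinePerms (mem_zmultiples_of_intCast_eq_zero n) ≤ periodicPerms (N : ℤ) := fun _ hu =>
  periodicPerms_le (Int.mem_zmultiples_iff.2 (Int.natCast_dvd_natCast.2 hnN)) hu.1

def affineReduceHom : affinePerms (mem_zmultiples_of_intCast_eq_zero n) →* Equiv.Perm (ZMod N) :=
  (reduceHom N).comp (Subgroup.inclusion (affinePerms_le_periodicPerms hnN))

theorem affineReduceHom_intCast (u : affinePerms (mem_zmultiples_of_intCast_eq_zero n)) (j : ℤ) :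
    affineReduceHom hnN u j = ((u : Equiv.Perm ℤ) j : ZMod N) :=
  reduceHom_intCast _ j

theorem affineReduceHom_mem (u : affinePerms (mem_zmultiples_of_intCast_eq_zero n)) :
    affineReduceHom hnN u ∈ affinePerms (mem_zmultiples_of_castHom_eq_zero hnN) :=
  ⟨reduceHom_mem_periodicPerms u.2.1, by
    rw [affineReduceHom, MonoidHom.comp_apply, totalDisplacement_reduceHom, Subgroup.coe_inclusion,
      u.2.2, Int.cast_zero]⟩

theorem mem_range_affineReduceHom {v : Equiv.Perm (ZMod N)}
    (hv : v ∈ affinePerms (mem_zmultiples_of_castHom_eq_zero hnN)) :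
    v ∈ (affineReduceHom hnN).range := by
  set π := ZMod.castHom hnN (ZMod n)
  have hσ : ∀ r, residueHom (mem_zmultiples_of_castHom_eq_zero hnN) ⟨v, hv.1⟩ r =
      r + Int.castRingHom (ZMod n) (liftDisplacement v r) := fun r => by
    rw [residueHom_apply, residue_eq_add, eq_intCast, ← map_intCast π,
      intCast_liftDisplacement hv.2]
  refine ⟨⟨_, ofDisplacement_mem_affinePerms _ hσ _ (sum_liftDisplacement v)⟩,
    Equiv.ext fun x => ?_⟩
  obtain ⟨j, rfl⟩ := ZMod.intCast_surjective x
  rw [affineReduceHom_intCast,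
    apply_eq_add_displacement (mem_zmultiples_of_castHom_eq_zero hnN) hv.1, ofDisplacement_apply,
    Int.cast_add, eq_intCast, ← map_intCast π, intCast_liftDisplacement hv.2]

theorem range_affineReduceHom :
    (affineReduceHom hnN).range = affinePerms (mem_zmultiples_of_castHom_eq_zero hnN) := by
  ext v
  constructor
  · rintro ⟨u, rfl⟩
    exact affineReduceHom_mem hnN u
  · exact mem_range_affineReduceHom hnN

end Reduction

section Window

/-- `m` lies in the window `{a + 1 + tn, …, a + n + tn}` with `t = windowIndex n a m`. -/
def windowIndex (n : ℕ) (a m : ℤ) : ℤ := (m - a - 1) / n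

variable {n : ℕ} {s : Fin n → Equiv.Perm ℤ}

theorem windowIndex_stdGens (hs : stdGens n s) {i j : Fin n} (hji : j ≠ i) (m : ℤ) :
    windowIndex n i (s j m) = windowIndex n i m := by
  have hne := Fin.natCast_zmod_ne_of_ne hji
  have hn : (0 : ℤ) < n := by exact_mod_cast i.pos
  rw [hs j m, windowIndex, windowIndex]
  split_ifs with h₁ h₂
  · rw [show m + 1 - ((i : ℕ) : ℤ) - 1 = m - i - 1 + 1 by ring]
    refine Int.ediv_add_one_of_not_dvd hn fun hd => hne ?_
    have h := (ZMod.intCast_zmod_eq_zero_iff_dvd _ n).2 hd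
    push_cast at h
    linear_combination h - h₁
  · rw [show m - 1 - ((i : ℕ) : ℤ) - 1 = m - i - 2 by ring,
      show m - ((i : ℕ) : ℤ) - 1 = m - i - 2 + 1 by ring]
    refine (Int.ediv_add_one_of_not_dvd hn fun hd => hne ?_).symm
    have h := (ZMod.intCast_zmod_eq_zero_iff_dvd _ n).2 hd
    push_cast at h
    linear_combination h - h₂
  · rfl

theorem windowIndex_of_mem_closure (hs : stdGens n s) (i : Fin n) {u : Equiv.Perm ℤ}
    (hu : u ∈ Subgroup.closure (s '' {l | l ≠ i})) (m : ℤ) :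
    windowIndex n i (u m) = windowIndex n i m := by
  induction hu using Subgroup.closure_induction generalizing m with
  | mem x hx =>
    obtain ⟨j, hj, rfl⟩ := hx
    exact windowIndex_stdGens hs hj m
  | one => rfl
  | mul a b _ _ ha hb => rw [Equiv.Perm.mul_apply, ha, hb]
  | inv a _ ha => simpa using (ha (a⁻¹ m)).symm

theorem abs_apply_sub_lt_of_mem_closure (hs : stdGens n s) (i : Fin n) {u : Equiv.Perm ℤ}
    (hu : u ∈ Subgroup.closure (s '' {l | l ≠ i})) (m : ℤ) : |u m - m| < n := by
  have h := Int.abs_sub_lt_of_ediv_eq (by exact_mod_cast i.pos)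
    (windowIndex_of_mem_closure hs i hu m)
  rwa [sub_sub_sub_cancel_right, sub_sub_sub_cancel_right] at h

theorem eq_one_of_mem_closure_of_intCast_apply (hs : stdGens n s) (i : Fin n) {N : ℕ}
    (hnN : n ∣ N) (hN : N ≠ 0) {u : Equiv.Perm ℤ} (hu : u ∈ Subgroup.closure (s '' {l | l ≠ i}))
    (hred : ∀ m : ℤ, (u m : ZMod N) = m) : u = 1 := by
  ext m
  have hdvd : (N : ℤ) ∣ u m - m := (ZMod.intCast_eq_intCast_iff_dvd_sub _ _ _).1 (hred m).symm
  have hle : (n : ℤ) ≤ N := by exact_mod_cast Nat.le_of_dvd (Nat.pos_of_ne_zero hN) hnN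
  have h := Int.eq_zero_of_abs_lt_dvd hdvd
    ((abs_apply_sub_lt_of_mem_closure hs i hu m).trans_le hle)
  rw [Equiv.Perm.one_apply]
  linarith

theorem ker_affineReduceHom_inf_closure_eq_bot [NeZero n] {N : ℕ} [NeZero N] (hnN : n ∣ N)
    (hs : stdGens n s) (i : Fin n) :
    (affineReduceHom hnN).ker ⊓ Subgroup.comap (affinePerms _).subtype
      (Subgroup.closure (s '' {l | l ≠ i})) = ⊥ := by
  rw [eq_bot_iff]
  rintro u ⟨hker, hpar⟩
  refine Subtype.ext <| eq_one_of_mem_closure_of_intCast_apply hs i hnN (NeZero.ne N) hpar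
    fun m => ?_
  have h := DFunLike.congr_fun (MonoidHom.mem_ker.1 hker) (m : ZMod N)
  rwa [affineReduceHom_intCast, Equiv.Perm.one_apply] at h

end Window

end AffinePerm

open AffinePerm in
/-- For every `k ≥ 1` the reduction map `φ : S̃_n → S̃_n(k)` (reducing an affine permutation of
`ℤ` modulo `kn`) is a group homomorphism with range exactly `S̃_n(k)` (the affine permutations
of `ℤ_{kn}`), its kernel meets each maximal parabolic `K_{{i}} = ⟨s̃_j : j ≠ i⟩` trivially, and
`|S̃_n(k)| = k^{n-1}·n!`. -/
theorem stmt16 (n k : ℕ) (hn : 2 ≤ n) (hk : 1 ≤ k)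
    (s : Fin n → Equiv.Perm ℤ) (hs : stdGens n s) :
    ∃ (H : Subgroup (Equiv.Perm ℤ)) (Hk : Subgroup (Equiv.Perm (ZMod (k * n)))),
      (H : Set (Equiv.Perm ℤ)) = {u : Equiv.Perm ℤ |
          (∀ j : ℤ, u (j + n) = u j + n) ∧
          ∑ i ∈ Finset.Icc (1 : ℤ) (n : ℤ), u i = ((n + 1).choose 2 : ℤ)} ∧
      (Hk : Set (Equiv.Perm (ZMod (k * n)))) = {v : Equiv.Perm (ZMod (k * n)) |
          (∀ j : ZMod (k * n), v (j + n) = v j + n) ∧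
          ∑ i ∈ Finset.Icc (1 : ℕ) n, v (i : ZMod (k * n)) =
            (((n + 1).choose 2 : ℕ) : ZMod (k * n))} ∧
      ∃ φ : H →* Equiv.Perm (ZMod (k * n)),
        (∀ (u : H) (j : ℤ), (φ u) ((j : ZMod (k * n))) =
          (((u : Equiv.Perm ℤ) j : ℤ) : ZMod (k * n))) ∧
        φ.range = Hk ∧
        (∀ i : Fin n,
          φ.ker ⊓ Subgroup.comap H.subtype (Subgroup.closure (s '' {l | l ≠ i})) = ⊥) ∧
        Nat.card Hk = k ^ (n - 1) * Nat.factorial n := by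
  have : NeZero n := ⟨by omega⟩
  have : NeZero (k * n) := ⟨by positivity⟩
  have hnN : n ∣ k * n := dvd_mul_left n k
  refine ⟨_, _, ?_, Set.ext fun v => mem_affinePerms_iff (mem_zmultiples_of_castHom_eq_zero hnN),
    affineReduceHom hnN, affineReduceHom_intCast hnN, range_affineReduceHom hnN,
    ker_affineReduceHom_inf_closure_eq_bot hnN hs, ?_⟩
  · ext u
    rw [SetLike.mem_coe, mem_affinePerms_iff, Set.mem_ofPred_eq, Int.sum_Icc_one_natCast]
  · rw [card_affinePerms, ZMod.card_ker_castHom]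
end
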